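/- arXiv:2102.12886 — 5 statements merged into one kernel-verified Lean document; each statement's English description precedes it below -/
import Mathlib

section
/- Let f, g : ℝ → ℝ be piecewise linear functions, with f piecewise linear with at most p pieces and g piecewise linear with at most q pieces, and suppose g is monotone (either monotonically nondecreasing on ℝ or monotonically nonincreasing on ℝ). Then the composition h(x) = f(g(x)) is piecewise linear with at most p + q pieces. -/
/-!
Call a finite set `S` of breakpoints admissible for `f` if `f` is affine on every set `R` that no
point of `S` splits, i.e. every point of `S` is a lower or an upper bound of `R`; `f` has at most
`k` pieces iff it has an admissible set of fewer than `k` points. For `f ∘ g`, take the breakpoints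
of `g` together with one preimage under `g` of every breakpoint of `f` that `g` attains. On a set
`R` split by none of these, `g` is affine, and since `g` is monotone or antitone and continuous (so
its range is an interval), no breakpoint of `f` splits `g '' R`; hence `f` is affine on `g '' R`.
This gives `(p - 1) + (q - 1)` breakpoints, i.e. at most `p + q - 1` pieces.
-/

/-- `f : ℝ → ℝ` is piecewise linear with at most `k` pieces: there are
breakpoints `c 0 ≤ c 1 ≤ … ≤ c (k-2)` such that on each of the `k` intervals
`(-∞, c 0], [c 0, c 1], …, [c (k-2), ∞)` the function `f` agrees with some
affine function `x ↦ a * x + b`. -/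
def PiecewiseAffineWith (f : ℝ → ℝ) (k : ℕ) : Prop :=
  0 < k ∧ ∃ c : Fin (k - 1) → ℝ, Monotone c ∧
    ∀ j : Fin k, ∃ a b : ℝ, ∀ y : ℝ,
      (∀ i : Fin (k - 1), (i : ℕ) < (j : ℕ) → c i ≤ y) →
      (∀ i : Fin (k - 1), (j : ℕ) ≤ (i : ℕ) → y ≤ c i) →
      f y = a * y + b

open Set

section LinearOrder

variable {α : Type*} [LinearOrder α]

def breakpointCell {n : ℕ} (c : Fin n → α) (j : ℕ) : Set α :=
  {y | (∀ i : Fin n, (i : ℕ) < j → c i ≤ y) ∧ (∀ i : Fin n, j ≤ (i : ℕ) → y ≤ c i)}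

theorem breakpoint_mem_bounds_breakpointCell {n : ℕ} (c : Fin n → α) (i : Fin n) (j : ℕ) :
    c i ∈ lowerBounds (breakpointCell c j) ∪ upperBounds (breakpointCell c j) := by
  rcases lt_or_ge (i : ℕ) j with h | h
  · exact Or.inl fun y hy => hy.1 i h
  · exact Or.inr fun y hy => hy.2 i h

theorem isClosed_breakpointCell [TopologicalSpace α] [OrderClosedTopology α] {n : ℕ}
    (c : Fin n → α) (j : ℕ) : IsClosed (breakpointCell c j) := by
  simp only [breakpointCell, ofPred_and, ofPred_forall]
  exact (isClosed_iInter fun i => isClosed_iInter fun _ => isClosed_Ici).inter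
    (isClosed_iInter fun i => isClosed_iInter fun _ => isClosed_Iic)

theorem exists_subset_breakpointCell {n : ℕ} {c : Fin n → α} (hc : Monotone c) {R : Set α}
    (hR : ∀ i, c i ∈ lowerBounds R ∪ upperBounds R) : ∃ j ≤ n, R ⊆ breakpointCell c j := by
  classical
  have hP : ∃ j, ∀ i : Fin n, j ≤ (i : ℕ) → c i ∈ upperBounds R :=
    ⟨n, fun i hi => absurd i.isLt (by omega)⟩
  refine ⟨Nat.find hP, Nat.find_min' hP fun i hi => absurd i.isLt (by omega),
    fun y hy => ⟨fun i hi => ?_, fun i hi => Nat.find_spec hP i hi hy⟩⟩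
  have : ∃ i' : Fin n, (i : ℕ) ≤ i' ∧ c i' ∉ upperBounds R := by
    simpa using Nat.find_min hP hi
  obtain ⟨i', hii', hi'⟩ := this
  exact (hc hii').trans (((hR i').resolve_right hi') hy)

theorem exists_monotone_fin_subset_range [Nonempty α] (S : Finset α) {m : ℕ} (hm : S.card ≤ m) :
    ∃ c : Fin m → α, Monotone c ∧ ↑S ⊆ range c := by
  classical
  let v : Fin m → α := fun i =>
    if h : (i : ℕ) < S.card then S.orderEmbOfFin rfl ⟨i, h⟩ else Classical.arbitrary α
  refine ⟨v ∘ Tuple.sort v, Tuple.monotone_sort v, ?_⟩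
  rw [EquivLike.range_comp, ← S.range_orderEmbOfFin rfl]
  rintro _ ⟨⟨k, hk⟩, rfl⟩
  exact ⟨⟨k, by omega⟩, by simp [v, hk]⟩

theorem Set.OrdConnected.mem_bounds_of_notMem {s : Set α} (hs : s.OrdConnected) {a : α}
    (ha : a ∉ s) : a ∈ lowerBounds s ∪ upperBounds s := by
  by_contra h
  simp only [mem_union, mem_lowerBounds, mem_upperBounds, not_or, not_forall, not_le] at h
  obtain ⟨⟨x, hx, hxa⟩, y, hy, hay⟩ := h
  exact ha (hs.out hx hy ⟨hxa.le, hay.le⟩)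

theorem image_mem_bounds_image {β : Type*} [LinearOrder β] {g : α → β}
    (hg : Monotone g ∨ Antitone g) {R : Set α} {t : α} (ht : t ∈ lowerBounds R ∪ upperBounds R) :
    g t ∈ lowerBounds (g '' R) ∪ upperBounds (g '' R) := by
  rcases hg with hg | hg <;> rcases ht with ht | ht
  · exact Or.inl (hg.mem_lowerBounds_image ht)
  · exact Or.inr (hg.mem_upperBounds_image ht)
  · exact Or.inr (hg.mem_upperBounds_image ht)
  · exact Or.inl (hg.mem_lowerBounds_image ht)

end LinearOrder

def IsAffineOn (f : ℝ → ℝ) (s : Set ℝ) : Prop :=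
  ∃ a b : ℝ, EqOn f (fun x => a * x + b) s

theorem IsAffineOn.continuousOn {f : ℝ → ℝ} {s : Set ℝ} (h : IsAffineOn f s) :
    ContinuousOn f s := by
  obtain ⟨a, b, hab⟩ := h
  exact (continuous_const.mul continuous_id |>.add continuous_const).continuousOn.congr hab

theorem IsAffineOn.comp {f g : ℝ → ℝ} {s : Set ℝ} (hf : IsAffineOn f (g '' s))
    (hg : IsAffineOn g s) : IsAffineOn (f ∘ g) s := by
  obtain ⟨a, b, hab⟩ := hf
  obtain ⟨a', b', hab'⟩ := hg
  refine ⟨a * a', a * b' + b, fun x hx => ?_⟩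
  rw [Function.comp_apply, hab (mem_image_of_mem g hx), hab' hx]
  ring

theorem piecewiseAffineWith_iff_finset {f : ℝ → ℝ} {k : ℕ} :
    PiecewiseAffineWith f k ↔ 0 < k ∧ ∃ S : Finset ℝ, S.card < k ∧
      ∀ R : Set ℝ, ↑S ⊆ lowerBounds R ∪ upperBounds R → IsAffineOn f R := by
  classical
  constructor
  · rintro ⟨hk, c, hc, hf⟩
    refine ⟨hk, Finset.univ.image c, ?_, fun R hR => ?_⟩
    · have := Finset.card_image_le (s := Finset.univ) (f := c)
      rw [Finset.card_univ, Fintype.card_fin] at this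
      omega
    · obtain ⟨j, hj, hRj⟩ := exists_subset_breakpointCell hc fun i => hR (by simp)
      obtain ⟨a, b, hab⟩ := hf ⟨j, by omega⟩
      exact ⟨a, b, fun y hy => hab y (hRj hy).1 (hRj hy).2⟩
  · rintro ⟨hk, S, hS, hf⟩
    obtain ⟨c, hc, hSc⟩ := exists_monotone_fin_subset_range S (m := k - 1) (by omega)
    refine ⟨hk, c, hc, fun j => ?_⟩
    obtain ⟨a, b, hab⟩ := hf (breakpointCell c j) fun s hs => by
      obtain ⟨i, rfl⟩ := hSc hs
      exact breakpoint_mem_bounds_breakpointCell c i j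
    exact ⟨a, b, fun y h₁ h₂ => hab ⟨h₁, h₂⟩⟩

namespace PiecewiseAffineWith

variable {f g : ℝ → ℝ} {k l p q : ℕ}

theorem continuous (h : PiecewiseAffineWith f k) : Continuous f := by
  obtain ⟨hk, c, hc, hf⟩ := h
  refine (locallyFinite_of_finite fun j : Fin k => breakpointCell c j).continuous ?_
    (fun j => isClosed_breakpointCell c j) fun j => ?_
  · refine eq_univ_of_forall fun y => ?_
    obtain ⟨j, hj, hy⟩ := exists_subset_breakpointCell hc (R := {y}) fun i => by simp
    exact mem_iUnion.2 ⟨⟨j, by omega⟩, hy rfl⟩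
  · obtain ⟨a, b, hab⟩ := hf j
    exact IsAffineOn.continuousOn ⟨a, b, fun y hy => hab y hy.1 hy.2⟩

theorem mono (h : PiecewiseAffineWith f k) (hkl : k ≤ l) : PiecewiseAffineWith f l := by
  obtain ⟨hk, S, hS, hf⟩ := piecewiseAffineWith_iff_finset.1 h
  exact piecewiseAffineWith_iff_finset.2 ⟨by omega, S, by omega, hf⟩

theorem comp (hf : PiecewiseAffineWith f p) (hg : PiecewiseAffineWith g q)
    (hmono : Monotone g ∨ Antitone g) : PiecewiseAffineWith (f ∘ g) (p + q - 1) := by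
  classical
  have hrange : (range g).OrdConnected := (isPreconnected_range hg.continuous).ordConnected
  obtain ⟨hp, Sf, hSf, hfS⟩ := piecewiseAffineWith_iff_finset.1 hf
  obtain ⟨hq, Sg, hSg, hgS⟩ := piecewiseAffineWith_iff_finset.1 hg
  refine piecewiseAffineWith_iff_finset.2
    ⟨by omega, Sg ∪ Sf.image (Function.invFun g), ?_, fun R hR => ?_⟩
  · have := (Finset.card_union_le Sg (Sf.image (Function.invFun g))).trans
      (Nat.add_le_add_left (Finset.card_image_le (s := Sf) (f := Function.invFun g)) _)
    omega
  refine (hfS _ fun a ha => ?_).comp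
    (hgS R ((Finset.coe_subset.2 Finset.subset_union_left).trans hR))
  by_cases hag : a ∈ range g
  · rw [← Function.invFun_eq hag]
    exact image_mem_bounds_image hmono
      (hR (Finset.mem_union_right _ (Finset.mem_image_of_mem _ ha)))
  · have hR' : g '' R ⊆ range g := image_subset_range g R
    exact union_subset_union (lowerBounds_mono_set hR') (upperBounds_mono_set hR')
      (hrange.mem_bounds_of_notMem hag)

end PiecewiseAffineWith

/-- if `f` is piecewise linear with at most `p` pieces, `g` is
piecewise linear with at most `q` pieces, and `g` is monotone (nondecreasing
or nonincreasing on all of `ℝ`), then `f ∘ g` is piecewise linear with at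
most `p + q` pieces. -/
theorem comp_piecewise_linear_monotone (f g : ℝ → ℝ) (p q : ℕ)
    (hfp : PiecewiseAffineWith f p) (hgq : PiecewiseAffineWith g q)
    (hg : Monotone g ∨ Antitone g) :
    PiecewiseAffineWith (fun x : ℝ => f (g x)) (p + q) :=
  (hfp.comp hgq hg).mono (Nat.sub_le _ _)
end

section
/- Let F and G be nonempty finite sets of affine functions from ℝ to ℝ, and let H = { f ∘ g : f ∈ F, g ∈ G } be the set of all compositions. Then for every x ∈ ℝ, the lower envelope of H satisfies H_↓(x) = min{ F_↓(G_↓(x)), F_↓(G_↑(x)) }, where F_↓, G_↓ denote pointwise minima over F, G respectively and G_↑ denotes the pointwise maximum over G. -/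
/-- if `F`, `G` are nonempty finite sets of affine functions and
`H = {f ∘ g | f ∈ F, g ∈ G}`, then for all `x`,
`H_↓(x) = min (F_↓(G_↓(x))) (F_↓(G_↑(x)))`. -/
theorem lower_envelope_comp (F G H : Finset (ℝ → ℝ))
    (hF : F.Nonempty) (hG : G.Nonempty) (hH : H.Nonempty)
    (hFAff : ∀ f ∈ F, ∃ a b : ℝ, ∀ x : ℝ, f x = a * x + b)
    (hGAff : ∀ g ∈ G, ∃ a b : ℝ, ∀ x : ℝ, g x = a * x + b)
    (hHmem : ∀ h : ℝ → ℝ, h ∈ H ↔ ∃ f ∈ F, ∃ g ∈ G, h = f ∘ g) :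
    ∀ x : ℝ,
      H.inf' hH (fun h => h x) =
        min (F.inf' hF (fun f => f (G.inf' hG (fun g => g x))))
            (F.inf' hF (fun f => f (G.sup' hG (fun g => g x)))) := by
  intro x
  obtain ⟨g₀, hg₀, hg₀eq⟩ := Finset.exists_mem_eq_inf' hG (fun g => g x)
  obtain ⟨g₁, hg₁, hg₁eq⟩ := Finset.exists_mem_eq_sup' hG (fun g => g x)
  apply le_antisymm
  · apply le_min
    · apply Finset.le_inf'
      intro f hf
      have : (f ∘ g₀) ∈ H := (hHmem _).2 ⟨f, hf, g₀, hg₀, rfl⟩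
      calc H.inf' hH (fun h => h x) ≤ (f ∘ g₀) x := Finset.inf'_le _ this
        _ = f (G.inf' hG (fun g => g x)) := by simp [hg₀eq]
    · apply Finset.le_inf'
      intro f hf
      have : (f ∘ g₁) ∈ H := (hHmem _).2 ⟨f, hf, g₁, hg₁, rfl⟩
      calc H.inf' hH (fun h => h x) ≤ (f ∘ g₁) x := Finset.inf'_le _ this
        _ = f (G.sup' hG (fun g => g x)) := by simp [hg₁eq]
  · apply Finset.le_inf'
    intro h hh
    obtain ⟨f, hf, g, hg, rfl⟩ := (hHmem h).1 hh
    obtain ⟨a, b, hab⟩ := hFAff f hf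
    have hlo : G.inf' hG (fun g => g x) ≤ g x := Finset.inf'_le _ hg
    have hhi : g x ≤ G.sup' hG (fun g => g x) := Finset.le_sup' (fun g : ℝ → ℝ => g x) hg
    rcases le_or_gt 0 a with ha | ha
    · calc min (F.inf' hF (fun f => f (G.inf' hG (fun g => g x))))
            (F.inf' hF (fun f => f (G.sup' hG (fun g => g x))))
          ≤ F.inf' hF (fun f => f (G.inf' hG (fun g => g x))) := min_le_left _ _
        _ ≤ f (G.inf' hG (fun g => g x)) := Finset.inf'_le _ hf
        _ ≤ (f ∘ g) x := by
            simp only [Function.comp, hab]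
            nlinarith
    · calc min (F.inf' hF (fun f => f (G.inf' hG (fun g => g x))))
            (F.inf' hF (fun f => f (G.sup' hG (fun g => g x))))
          ≤ F.inf' hF (fun f => f (G.sup' hG (fun g => g x))) := min_le_right _ _
        _ ≤ f (G.sup' hG (fun g => g x)) := Finset.inf'_le _ hf
        _ ≤ (f ∘ g) x := by
            simp only [Function.comp, hab]
            nlinarith
end

section
/- Let F and G be nonempty finite sets of affine functions from ℝ to ℝ, and let H = { f ∘ g : f ∈ F, g ∈ G } be the set of all compositions. Then for every x ∈ ℝ, the upper envelope of H satisfies H_↑(x) = max{ F_↑(G_↓(x)), F_↑(G_↑(x)) }, where F_↑, G_↑ denote pointwise maxima over F, G respectively and G_↓ denotes the pointwise minimum over G. -/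
/-! Let `lo = G_↓(x)` and `hi = G_↑(x)`. Since `H_↑(x) = max_{g ∈ G} F_↑(g x)` and every `g x` lies
in `[lo, hi]`, the maximum principle for the convex (affine) members of `F` bounds each `f (g x)` by
`max (f lo) (f hi)`. Conversely `lo` and `hi` are themselves values `g x`, so the bound is attained. -/

open Finset

lemma convexOn_affine {𝕜 : Type*} [Field 𝕜] [LinearOrder 𝕜] [IsStrictOrderedRing 𝕜]
    (s : Set 𝕜) (hs : Convex 𝕜 s) (a b : 𝕜) : ConvexOn 𝕜 s fun x => a * x + b :=
  ((LinearMap.mulLeft 𝕜 a).convexOn hs).add_const b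

section MaximumPrinciple

variable {𝕜 β ι : Type*} [Field 𝕜] [LinearOrder 𝕜] [IsStrictOrderedRing 𝕜]
  [AddCommGroup β] [LinearOrder β] [IsOrderedAddMonoid β] [Module 𝕜 β]
  [IsStrictOrderedModule 𝕜 β]

theorem Finset.sup'_sup'_eq_max_of_convexOn (F : Finset (𝕜 → β)) (G : Finset ι)
    (hF : F.Nonempty) (hG : G.Nonempty) (u : ι → 𝕜) (hconv : ∀ f ∈ F, ConvexOn 𝕜 Set.univ f) :
    G.sup' hG (fun g => F.sup' hF fun f => f (u g)) =
      max (F.sup' hF fun f => f (G.inf' hG u)) (F.sup' hF fun f => f (G.sup' hG u)) := by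
  apply le_antisymm
  · refine sup'_le _ _ fun g hg => sup'_le _ _ fun f hf => ?_
    have hmem : u g ∈ Set.Icc (G.inf' hG u) (G.sup' hG u) := ⟨inf'_le u hg, le_sup' u hg⟩
    calc f (u g) ≤ max (f (G.inf' hG u)) (f (G.sup' hG u)) :=
          (hconv f hf).le_max_of_mem_Icc (Set.mem_univ _) (Set.mem_univ _) hmem
      _ ≤ _ := max_le_max (le_sup' (· (G.inf' hG u)) hf) (le_sup' (· (G.sup' hG u)) hf)
  · obtain ⟨glo, hglo, hlo⟩ := exists_mem_eq_inf' hG u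
    obtain ⟨ghi, hghi, hhi⟩ := exists_mem_eq_sup' hG u
    rw [hlo, hhi]
    exact max_le (le_sup' (fun g => F.sup' hF fun f => f (u g)) hglo)
      (le_sup' (fun g => F.sup' hF fun f => f (u g)) hghi)

end MaximumPrinciple

theorem upper_envelope_comp_general (F G H : Finset (ℝ → ℝ))
    (hF : F.Nonempty) (hG : G.Nonempty) (hH : H.Nonempty)
    (hFAff : ∀ f ∈ F, ∃ a b : ℝ, ∀ x : ℝ, f x = a * x + b)
    (hHmem : ∀ h : ℝ → ℝ, h ∈ H ↔ ∃ f ∈ F, ∃ g ∈ G, h = f ∘ g) :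
    ∀ x : ℝ,
      H.sup' hH (fun h => h x) =
        max (F.sup' hF (fun f => f (G.inf' hG (fun g => g x))))
            (F.sup' hF (fun f => f (G.sup' hG (fun g => g x)))) := by
  classical
  intro x
  have hconv : ∀ f ∈ F, ConvexOn ℝ Set.univ f := fun f hf => by
    obtain ⟨a, b, hab⟩ := hFAff f hf
    rw [funext hab]
    exact convexOn_affine Set.univ convex_univ a b
  obtain rfl : H = image₂ (· ∘ ·) F G := by
    ext h
    simp only [hHmem, mem_image₂, eq_comm]
  rw [sup'_image₂_right]
  exact sup'_sup'_eq_max_of_convexOn F G hF hG (fun g => g x) hconv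

/-- if `F`, `G` are nonempty finite sets of affine functions and
`H = {f ∘ g | f ∈ F, g ∈ G}`, then for all `x`,
`H_↑(x) = max (F_↑(G_↓(x))) (F_↑(G_↑(x)))`. -/
theorem upper_envelope_comp (F G H : Finset (ℝ → ℝ))
    (hF : F.Nonempty) (hG : G.Nonempty) (hH : H.Nonempty)
    (hFAff : ∀ f ∈ F, ∃ a b : ℝ, ∀ x : ℝ, f x = a * x + b)
    (hGAff : ∀ g ∈ G, ∃ a b : ℝ, ∀ x : ℝ, g x = a * x + b)
    (hHmem : ∀ h : ℝ → ℝ, h ∈ H ↔ ∃ f ∈ F, ∃ g ∈ G, h = f ∘ g) :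
    ∀ x : ℝ,
      H.sup' hH (fun h => h x) =
        max (F.sup' hF (fun f => f (G.inf' hG (fun g => g x))))
            (F.sup' hF (fun f => f (G.sup' hG (fun g => g x)))) :=
  upper_envelope_comp_general F G H hF hG hH hFAff hHmem
end

section
/- Let F and G be nonempty finite sets of affine functions from ℝ to ℝ, and let H = { f ∘ g : f ∈ F, g ∈ G }. Then the lower envelope H_↓ is piecewise linear with p(H_↓) ≤ 4·p(F_↓) + 2·p(G_↓) + 2·p(G_↑) pieces, where F_↓, G_↓ are the pointwise minima over F, G and G_↑ is the pointwise maximum over G. -/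
/-- `p(f)`: the least `k` such that `f` is piecewise linear with at most `k` pieces. -/
noncomputable def nPieces (f : ℝ → ℝ) : ℕ := sInf {k | PiecewiseAffineWith f k}

/-!
Write `A = F↓ ∘ G↓` and `B = F↓ ∘ G↑`. Each `g x` lies in `[G↓ x, G↑ x]` and an affine `f` is
smallest at an end of that interval, so `H↓ = min A B`. Composing `F↓` with the concave `G↓`
adds to the breakpoints of `G↓` at most two points per breakpoint `d` of `F↓` (where `G↓` enters
and leaves `{G↓ ≥ d}`), so `A` has at most `p(G↓) + 2 p(F↓)` pieces; likewise `B`, as `G↑` is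
convex. Finally `H↓`, a lower envelope of affine maps, is the envelope of those maps that touch it
infinitely often; each of them has the slope of a piece of `A` or of `B`, and a lower envelope of
affine maps has at most as many pieces as there are distinct slopes.
-/

open Set

/-- Breakpoint-set form of `PiecewiseAffineWith` (see `AffineOnGaps.piecewiseAffineWith`);
unlike the indexed form it combines well under `min` and composition. -/
def AffineOnGaps (f : ℝ → ℝ) (C : Finset ℝ) : Prop :=
  ∀ y₁ y₂, y₁ ≤ y₂ → (∀ c ∈ C, c ≤ y₁ ∨ y₂ ≤ c) → ∃ a b : ℝ, ∀ y ∈ Icc y₁ y₂, f y = a * y + b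

/-- The `j`-th piece in `PiecewiseAffineWith`. -/
def piece {n : ℕ} (c : Fin n → ℝ) (j : Fin (n + 1)) : Set ℝ :=
  {y | (∀ i : Fin n, (i : ℕ) < j → c i ≤ y) ∧ ∀ i : Fin n, (j : ℕ) ≤ i → y ≤ c i}

theorem continuous_of_affine {f : ℝ → ℝ} {a b : ℝ} (h : ∀ x, f x = a * x + b) : Continuous f := by
  rw [funext h]
  fun_prop

theorem affine_coeffs_eq {a₁ b₁ a₂ b₂ y₁ y₂ : ℝ} (hne : y₁ ≠ y₂)
    (h₁ : a₁ * y₁ + b₁ = a₂ * y₁ + b₂) (h₂ : a₁ * y₂ + b₁ = a₂ * y₂ + b₂) :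
    a₁ = a₂ ∧ b₁ = b₂ := by
  have ha : a₁ = a₂ := mul_right_cancel₀ (sub_ne_zero.mpr hne) (by linear_combination h₁ - h₂)
  subst ha
  exact ⟨rfl, by linarith⟩

theorem exists_affine_of_forall_Icc {f : ℝ → ℝ} {S : Set ℝ}
    (h : ∀ y₁ ∈ S, ∀ y₂ ∈ S, y₁ < y₂ → ∃ a b : ℝ, ∀ y ∈ Icc y₁ y₂, f y = a * y + b) :
    ∃ a b : ℝ, ∀ y ∈ S, f y = a * y + b := by
  rcases S.subsingleton_or_nontrivial with hS | ⟨z₁, hz₁, z₂, hz₂, hne⟩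
  · rcases S.eq_empty_or_nonempty with rfl | ⟨y₀, hy₀⟩
    · exact ⟨0, 0, by simp⟩
    · exact ⟨0, f y₀, fun y hy => by rw [hS hy hy₀]; ring⟩
  obtain ⟨y₁, hy₁, y₂, hy₂, h12⟩ : ∃ y₁ ∈ S, ∃ y₂ ∈ S, y₁ < y₂ := by
    rcases hne.lt_or_gt with h | h
    exacts [⟨z₁, hz₁, z₂, hz₂, h⟩, ⟨z₂, hz₂, z₁, hz₁, h⟩]
  obtain ⟨a, b, hab⟩ := h y₁ hy₁ y₂ hy₂ h12
  refine ⟨a, b, fun y hy => ?_⟩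
  have hmin : min y y₁ ∈ S := by rcases min_choice y y₁ with h | h <;> rw [h] <;> assumption
  have hmax : max y y₂ ∈ S := by rcases max_choice y y₂ with h | h <;> rw [h] <;> assumption
  obtain ⟨a', b', hab'⟩ :=
    h _ hmin _ hmax ((min_le_right y y₁).trans_lt (h12.trans_le (le_max_right y y₂)))
  have e₁ : a' * y₁ + b' = a * y₁ + b := by
    rw [← hab' y₁ ⟨min_le_right _ _, h12.le.trans (le_max_right _ _)⟩, hab y₁ ⟨le_rfl, h12.le⟩]
  have e₂ : a' * y₂ + b' = a * y₂ + b := by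
    rw [← hab' y₂ ⟨(min_le_right _ _).trans h12.le, le_max_right _ _⟩, hab y₂ ⟨h12.le, le_rfl⟩]
  obtain ⟨rfl, rfl⟩ := affine_coeffs_eq h12.ne e₁ e₂
  exact hab' y ⟨min_le_left _ _, le_max_left _ _⟩

theorem exists_Icc_subset_piece {n : ℕ} {c : Fin n → ℝ} (hc : Monotone c) {y₁ y₂ : ℝ}
    (havoid : ∀ i, c i ≤ y₁ ∨ y₂ ≤ c i) : ∃ j, Icc y₁ y₂ ⊆ piece c j := by
  by_cases hex : ∃ i, y₂ ≤ c i
  · obtain ⟨i₀, hi₀, hmin⟩ := wellFounded_lt.has_min {i | y₂ ≤ c i} hex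
    refine ⟨i₀.castSucc, fun y hy => ⟨fun i hi => ?_, fun i hi => ?_⟩⟩
    · have : ¬ y₂ ≤ c i := fun h => hmin i h (by simpa using hi)
      exact ((havoid i).resolve_right this).trans hy.1
    · exact hy.2.trans (hi₀.trans (hc (by simpa using hi)))
  · refine ⟨Fin.last n, fun y hy => ⟨fun i _ => ?_, fun i hi => ?_⟩⟩
    · exact ((havoid i).resolve_right fun h => hex ⟨i, h⟩).trans hy.1
    · simp at hi
      omega

theorem exists_mem_piece {n : ℕ} {c : Fin n → ℝ} (hc : Monotone c) (y : ℝ) :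
    ∃ j, y ∈ piece c j :=
  (exists_Icc_subset_piece hc fun i => le_total (c i) y).imp fun _ hj => hj ⟨le_rfl, le_rfl⟩

theorem PiecewiseAffineWith.exists_affineOnGaps {f : ℝ → ℝ} {k : ℕ}
    (h : PiecewiseAffineWith f k) : ∃ C : Finset ℝ, C.card < k ∧ AffineOnGaps f C := by
  obtain ⟨hk, c, hc, hpiece⟩ := h
  obtain ⟨n, rfl⟩ : ∃ n, k = n + 1 := ⟨k - 1, by omega⟩
  refine ⟨Finset.univ.image c, Finset.card_image_le.trans_lt (by simp), ?_⟩
  intro y₁ y₂ _ havoid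
  obtain ⟨j, hj⟩ := exists_Icc_subset_piece hc fun i => havoid (c i) (by simp)
  obtain ⟨a, b, hab⟩ := hpiece j
  exact ⟨a, b, fun y hy => hab y (hj hy).1 (hj hy).2⟩

theorem AffineOnGaps.piecewiseAffineWith {f : ℝ → ℝ} {C : Finset ℝ} (hf : AffineOnGaps f C) :
    PiecewiseAffineWith f (C.card + 1) := by
  set c := C.orderEmbOfFin rfl
  refine ⟨C.card.succ_pos, c, c.monotone, fun j => ?_⟩
  have hgap : ∀ y₁ ∈ piece c j, ∀ y₂ ∈ piece c j, y₁ < y₂ →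
      ∃ a b : ℝ, ∀ y ∈ Icc y₁ y₂, f y = a * y + b := by
    refine fun y₁ hy₁ y₂ hy₂ h12 => hf y₁ y₂ h12.le fun x hx => ?_
    obtain ⟨i, rfl⟩ : x ∈ range c := by rwa [Finset.range_orderEmbOfFin]
    rcases lt_or_ge (i : ℕ) j with hi | hi
    exacts [Or.inl (hy₁.1 i hi), Or.inr (hy₂.2 i hi)]
  obtain ⟨a, b, hab⟩ := exists_affine_of_forall_Icc hgap
  exact ⟨a, b, fun y h₁ h₂ => hab y ⟨h₁, h₂⟩⟩

theorem exists_affineOnGaps_card_lt_nPieces {f : ℝ → ℝ} (hf : ∃ C₀, AffineOnGaps f C₀) :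
    ∃ C : Finset ℝ, C.card < nPieces f ∧ AffineOnGaps f C :=
  let ⟨_, hC₀⟩ := hf
  PiecewiseAffineWith.exists_affineOnGaps
    (Nat.sInf_mem (s := {k | PiecewiseAffineWith f k}) ⟨_, hC₀.piecewiseAffineWith⟩)

theorem PiecewiseAffineWith.exists_slopes {f : ℝ → ℝ} {k : ℕ} (h : PiecewiseAffineWith f k) :
    ∃ S : Finset ℝ, S.card ≤ k ∧ ∀ a b : ℝ, {y | f y = a * y + b}.Infinite → a ∈ S := by
  obtain ⟨hk, c, hc, hpiece⟩ := h
  obtain ⟨n, rfl⟩ : ∃ n, k = n + 1 := ⟨k - 1, by omega⟩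
  choose P Q hPQ using hpiece
  refine ⟨Finset.univ.image P, Finset.card_image_le.trans (by simp), fun a b hinf => ?_⟩
  obtain ⟨j, hj⟩ : ∃ j, ({y | f y = a * y + b} ∩ piece c j).Infinite := by
    by_contra! hfin
    refine hinf ((finite_iUnion hfin).subset fun y hy => ?_)
    obtain ⟨j, hj⟩ := exists_mem_piece hc y
    exact mem_iUnion.mpr ⟨j, hy, hj⟩
  obtain ⟨y₁, ⟨hy₁, hp₁⟩, y₂, ⟨hy₂, hp₂⟩, hne⟩ := hj.nontrivial
  have e₁ : a * y₁ + b = P j * y₁ + Q j := hy₁.symm.trans (hPQ j y₁ hp₁.1 hp₁.2)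
  have e₂ : a * y₂ + b = P j * y₂ + Q j := hy₂.symm.trans (hPQ j y₂ hp₂.1 hp₂.2)
  exact Finset.mem_image.mpr ⟨j, Finset.mem_univ _, (affine_coeffs_eq hne e₁ e₂).1.symm⟩

theorem AffineOnGaps.neg {f : ℝ → ℝ} {C : Finset ℝ} (hf : AffineOnGaps f C) :
    AffineOnGaps (fun x => -f x) C := fun y₁ y₂ h12 havoid =>
  let ⟨a, b, hab⟩ := hf y₁ y₂ h12 havoid
  ⟨-a, -b, fun y hy => by dsimp only; rw [hab y hy]; ring⟩

theorem AffineOnGaps.comp_neg {f : ℝ → ℝ} {C : Finset ℝ} (hf : AffineOnGaps f C) :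
    AffineOnGaps (fun x => f (-x)) (C.image Neg.neg) := by
  intro y₁ y₂ h12 havoid
  obtain ⟨a, b, hab⟩ := hf (-y₂) (-y₁) (neg_le_neg h12) fun c hc => by
    rcases havoid (-c) (Finset.mem_image_of_mem _ hc) with h | h
    exacts [Or.inr (by linarith), Or.inl (by linarith)]
  exact ⟨-a, b, fun y hy => by dsimp only; rw [hab (-y) ⟨neg_le_neg hy.2, neg_le_neg hy.1⟩]; ring⟩

theorem AffineOnGaps.min_affine {φ : ℝ → ℝ} {C : Finset ℝ} (hφ : AffineOnGaps φ C)
    (hcont : Continuous φ) (a b : ℝ) (hanti : Antitone fun x => φ x - a * x) :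
    ∃ u, AffineOnGaps (fun x => min (a * x + b) (φ x)) (insert u C) := by
  have hd : Antitone fun x => φ x - (a * x + b) := fun x y hxy => by
    have := hanti hxy
    dsimp only at this ⊢
    linarith
  -- the breakpoint is a zero of `φ - (a x + b)`, if there is one
  obtain ⟨u, hu⟩ : ∃ u, (∃ z, φ z - (a * z + b) = 0) → φ u - (a * u + b) = 0 := by
    by_cases h : ∃ z, φ z - (a * z + b) = 0
    · exact h.imp fun z hz _ => hz
    · exact ⟨0, fun h' => absurd h' h⟩
  refine ⟨u, fun y₁ y₂ h12 havoid => ?_⟩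
  have hside : 0 ≤ φ y₂ - (a * y₂ + b) ∨ φ y₁ - (a * y₁ + b) ≤ 0 := by
    by_contra! h
    obtain ⟨z, -, hz⟩ := intermediate_value_Icc' h12 (by fun_prop : Continuous
      fun x => φ x - (a * x + b)).continuousOn ⟨h.1.le, h.2.le⟩
    have hu0 := hu ⟨z, hz⟩
    rcases havoid u (Finset.mem_insert_self u C) with h' | h'
    · linarith [hd h']
    · linarith [hd h']
  rcases hside with h | h
  · refine ⟨a, b, fun y hy => min_eq_left ?_⟩
    have := hd hy.2
    dsimp only at this
    linarith
  · obtain ⟨a', b', hab⟩ := hφ y₁ y₂ h12 fun c hc => havoid c (Finset.mem_insert_of_mem hc)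
    refine ⟨a', b', fun y hy => ?_⟩
    have := hd hy.1
    dsimp only at this ⊢
    rw [min_eq_right (by linarith), hab y hy]

section Envelope

variable {ι : Type*} {s : Finset ι} (hs : s.Nonempty) {φ : ι → ℝ → ℝ}

theorem exists_lowerEnv_eq_of_slope_eq {a : ℝ} (hφ : ∀ i ∈ s, ∃ b, ∀ x, φ i x = a * x + b) :
    ∃ b, ∀ x, s.inf' hs (φ · x) = a * x + b := by
  obtain ⟨i₀, hi₀, h₀⟩ := s.exists_mem_eq_inf' hs (φ · 0)
  obtain ⟨b₀, hb₀⟩ := hφ i₀ hi₀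
  refine ⟨b₀, fun x => le_antisymm ((s.inf'_le _ hi₀).trans_eq (hb₀ x)) (s.le_inf' hs _ ?_)⟩
  intro i hi
  obtain ⟨b, hb⟩ := hφ i hi
  have := s.inf'_le (φ · 0) hi
  rw [h₀, hb₀, hb] at this
  rw [hb]
  linarith

theorem antitone_lowerEnv_sub {a : ℝ} (hφ : ∀ i ∈ s, ∃ a' ≤ a, ∃ b, ∀ x, φ i x = a' * x + b) :
    Antitone fun x => s.inf' hs (φ · x) - a * x := by
  intro x y hxy
  obtain ⟨i, hi, hix⟩ := s.exists_mem_eq_inf' hs (φ · x)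
  obtain ⟨a', ha', b, hb⟩ := hφ i hi
  have hy := s.inf'_le (φ · y) hi
  dsimp only at hix hy ⊢
  rw [hix, hb]
  rw [hb] at hy
  nlinarith [mul_le_mul_of_nonneg_right ha' (sub_nonneg.2 hxy)]

theorem AffineOnGaps.exists_lowerEnv_union [DecidableEq ι] {s₁ s₂ : Finset ι}
    (hs₁₂ : s₁ ∪ s₂ = s) (h₁ : s₁.Nonempty) (h₂ : s₂.Nonempty) {a : ℝ}
    (hφ₁ : ∀ i ∈ s₁, ∃ b, ∀ x, φ i x = a * x + b)
    (hφ₂ : ∀ i ∈ s₂, ∃ a' ≤ a, ∃ b, ∀ x, φ i x = a' * x + b) {C : Finset ℝ}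
    (hC : AffineOnGaps (fun x => s₂.inf' h₂ (φ · x)) C) :
    ∃ u, AffineOnGaps (fun x => s.inf' hs (φ · x)) (insert u C) := by
  obtain ⟨b, hb⟩ := exists_lowerEnv_eq_of_slope_eq h₁ hφ₁
  have hcont : Continuous fun x => s₂.inf' h₂ (φ · x) :=
    Continuous.finset_inf'_apply h₂ fun i hi =>
      let ⟨_, _, _, hb⟩ := hφ₂ i hi; continuous_of_affine hb
  obtain ⟨u, hu⟩ := hC.min_affine hcont a b (antitone_lowerEnv_sub h₂ hφ₂)
  have henv : ∀ x, s.inf' hs (φ · x) = min (a * x + b) (s₂.inf' h₂ (φ · x)) := fun x => by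
    rw [← hb x, ← Finset.inf'_union]
    exact s.inf'_congr hs hs₁₂.symm fun _ _ => rfl
  exact ⟨u, funext henv ▸ hu⟩

theorem exists_affineOnGaps_lowerEnv (S : Finset ℝ)
    (hφ : ∀ i ∈ s, ∃ a ∈ S, ∃ b, ∀ x, φ i x = a * x + b) :
    ∃ C : Finset ℝ, C.card < S.card ∧ AffineOnGaps (fun x => s.inf' hs (φ · x)) C := by
  classical
  induction S using Finset.induction_on_max generalizing s with
  | empty =>
    obtain ⟨i, hi⟩ := hs
    obtain ⟨a, ha, -⟩ := hφ i hi
    simp at ha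
  | insert a S hlt ih =>
    have hcard : (insert a S).card = S.card + 1 :=
      Finset.card_insert_of_notMem fun h => lt_irrefl a (hlt a h)
    -- split off the functions of the largest slope `a`
    set s₁ := s.filter fun i => ∃ b, ∀ x, φ i x = a * x + b
    set s₂ := s.filter fun i => ¬ ∃ b, ∀ x, φ i x = a * x + b
    have hφ₂ : ∀ i ∈ s₂, ∃ a' ∈ S, ∃ b, ∀ x, φ i x = a' * x + b := by
      intro i hi
      obtain ⟨hi, hia⟩ := Finset.mem_filter.mp hi
      obtain ⟨a', ha', b, hb⟩ := hφ i hi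
      rcases Finset.mem_insert.mp ha' with rfl | ha'
      exacts [absurd ⟨b, hb⟩ hia, ⟨a', ha', b, hb⟩]
    rcases s₂.eq_empty_or_nonempty with h₂ | h₂
    · obtain ⟨b, hb⟩ := exists_lowerEnv_eq_of_slope_eq hs fun i hi => by
        by_contra h
        exact Finset.notMem_empty i (h₂ ▸ Finset.mem_filter.mpr ⟨hi, h⟩)
      exact ⟨∅, by simp [hcard], fun _ _ _ _ => ⟨a, b, fun y _ => hb y⟩⟩
    obtain ⟨C, hC, hC'⟩ := ih h₂ hφ₂
    rcases s₁.eq_empty_or_nonempty with h₁ | h₁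
    · have hs₂ : s = s₂ := (Finset.filter_true_of_mem (Finset.filter_eq_empty_iff.mp h₁)).symm
      exact ⟨C, by omega, fun y₁ y₂ h12 havoid => by
        simpa only [s.inf'_congr hs hs₂ fun _ _ => rfl] using hC' y₁ y₂ h12 havoid⟩
    obtain ⟨u, hu⟩ := hC'.exists_lowerEnv_union hs (Finset.filter_union_filter_not_eq _ s) h₁ h₂
      (fun i hi => (Finset.mem_filter.mp hi).2) fun i hi =>
        let ⟨a', ha', hb⟩ := hφ₂ i hi; ⟨a', (hlt a' ha').le, hb⟩
    exact ⟨insert u C, (Finset.card_insert_le u C).trans_lt (by omega), hu⟩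

theorem concaveOn_lowerEnv (hφ : ∀ i ∈ s, ∃ a b : ℝ, ∀ x, φ i x = a * x + b) :
    ConcaveOn ℝ univ fun x => s.inf' hs (φ · x) := by
  simp_rw [← Finset.inf'_apply hs φ]
  refine Finset.inf'_induction hs φ (fun f hf g hg => hf.inf hg) fun i hi => ?_
  obtain ⟨a, b, h⟩ := hφ i hi
  rw [funext h]
  exact ((LinearMap.mul ℝ ℝ a).concaveOn convex_univ).add_const b

theorem exists_affineOnGaps_lowerEnv_of_affine (hφ : ∀ i ∈ s, ∃ a b : ℝ, ∀ x, φ i x = a * x + b) :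
    ∃ C : Finset ℝ, AffineOnGaps (fun x => s.inf' hs (φ · x)) C := by
  choose! a b hab using hφ
  obtain ⟨C, -, hC⟩ := exists_affineOnGaps_lowerEnv hs (s.image a) fun i hi =>
    ⟨a i, Finset.mem_image_of_mem a hi, b i, hab i hi⟩
  exact ⟨C, hC⟩

theorem exists_mem_infinite_contact (hφ : ∀ i ∈ s, Continuous (φ i)) (x : ℝ) :
    ∃ i ∈ s, {y | φ i y = s.inf' hs (φ · y)}.Infinite ∧ φ i x = s.inf' hs (φ · x) := by
  classical
  set Z : ι → Set ℝ := fun i => {y | φ i y = s.inf' hs (φ · y)}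
  -- the contact sets are closed and cover `ℝ`; the finite ones miss a dense set
  have hZ : ∀ i ∈ s, IsClosed (Z i) := fun i hi =>
    isClosed_eq (hφ i hi) (Continuous.finset_inf'_apply hs hφ)
  have hU : (⋃ i ∈ s.filter fun i => (Z i).Finite, Z i).Finite :=
    (s.filter _).finite_toSet.biUnion fun i hi => (Finset.mem_filter.mp hi).2
  have hV : IsClosed (⋃ i ∈ s.filter fun i => (Z i).Infinite, Z i) :=
    isClosed_biUnion_finset fun i hi => hZ i (Finset.mem_filter.mp hi).1
  have hUV : (⋃ i ∈ s.filter fun i => (Z i).Finite, Z i)ᶜ ⊆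
      ⋃ i ∈ s.filter fun i => (Z i).Infinite, Z i := fun y hy => by
    obtain ⟨i, hi, hiy⟩ := s.exists_mem_eq_inf' hs (φ · y)
    by_cases hfin : (Z i).Finite
    · exact absurd (mem_iUnion₂.mpr ⟨i, Finset.mem_filter.mpr ⟨hi, hfin⟩, hiy.symm⟩) hy
    · exact mem_iUnion₂.mpr ⟨i, Finset.mem_filter.mpr ⟨hi, hfin⟩, hiy.symm⟩
  have hx := hV.closure_subset_iff.mpr hUV ((hU.countable.dense_compl ℝ).closure_eq ▸ mem_univ x)
  obtain ⟨i, hi, hxi⟩ := mem_iUnion₂.mp hx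
  exact ⟨i, (Finset.mem_filter.mp hi).1, (Finset.mem_filter.mp hi).2, hxi⟩

theorem exists_affineOnGaps_lowerEnv_of_contact (S : Finset ℝ)
    (hφ : ∀ i ∈ s, ∃ a b : ℝ, ∀ x, φ i x = a * x + b)
    (hS : ∀ i ∈ s, ∀ a b : ℝ, (∀ x, φ i x = a * x + b) →
      {y | φ i y = s.inf' hs (φ · y)}.Infinite → a ∈ S) :
    ∃ C : Finset ℝ, C.card < S.card ∧ AffineOnGaps (fun x => s.inf' hs (φ · x)) C := by
  classical
  have hcont : ∀ i ∈ s, Continuous (φ i) := fun i hi =>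
    let ⟨_, _, h⟩ := hφ i hi; continuous_of_affine h
  set t := s.filter fun i => {y | φ i y = s.inf' hs (φ · y)}.Infinite
  have ht : t.Nonempty :=
    let ⟨i, hi, hinf, _⟩ := exists_mem_infinite_contact hs hcont 0
    ⟨i, Finset.mem_filter.mpr ⟨hi, hinf⟩⟩
  have henv : ∀ x, t.inf' ht (φ · x) = s.inf' hs (φ · x) := fun x => by
    obtain ⟨i, hi, hinf, hix⟩ := exists_mem_infinite_contact hs hcont x
    exact le_antisymm ((t.inf'_le _ (Finset.mem_filter.mpr ⟨hi, hinf⟩)).trans_eq hix)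
      (Finset.inf'_mono _ (Finset.filter_subset _ _) ht)
  obtain ⟨C, hC, hC'⟩ := exists_affineOnGaps_lowerEnv ht S fun i hi => by
    obtain ⟨hi, hinf⟩ := Finset.mem_filter.mp hi
    obtain ⟨a, b, h⟩ := hφ i hi
    exact ⟨a, hS i hi a b h hinf, b, h⟩
  exact ⟨C, hC, funext henv ▸ hC'⟩

theorem upperEnv_eq_neg_lowerEnv (x : ℝ) :
    s.sup' hs (φ · x) = -s.inf' hs (fun i => -φ i x) := by
  obtain ⟨i, hi, hix⟩ := s.exists_mem_eq_inf' hs (fun i => -φ i x)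
  refine le_antisymm (s.sup'_le hs _ fun j hj => ?_) ?_
  · exact le_neg.mpr (s.inf'_le (fun i => -φ i x) hj)
  · rw [hix, neg_neg]
    exact s.le_sup' (φ · x) hi

theorem exists_affineOnGaps_upperEnv_of_affine
    (hφ : ∀ i ∈ s, ∃ a b : ℝ, ∀ x, φ i x = a * x + b) :
    ∃ C : Finset ℝ, AffineOnGaps (fun x => s.sup' hs (φ · x)) C := by
  obtain ⟨C, hC⟩ := exists_affineOnGaps_lowerEnv_of_affine hs (φ := fun i x => -φ i x)
    fun i hi => let ⟨a, b, h⟩ := hφ i hi; ⟨-a, -b, fun x => by rw [h]; ring⟩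
  exact ⟨C, funext (upperEnv_eq_neg_lowerEnv hs) ▸ hC.neg⟩

theorem convexOn_upperEnv (hφ : ∀ i ∈ s, ∃ a b : ℝ, ∀ x, φ i x = a * x + b) :
    ConvexOn ℝ univ fun x => s.sup' hs (φ · x) := by
  have := (concaveOn_lowerEnv hs (φ := fun i x => -φ i x)
    fun i hi => let ⟨a, b, h⟩ := hφ i hi; ⟨-a, -b, fun x => by rw [h]; ring⟩).neg
  exact funext (upperEnv_eq_neg_lowerEnv hs) ▸ this

end Envelope

section Composition

variable {ψ : ℝ → ℝ}

theorem isLeast_superlevel (hψ : QuasiconcaveOn ℝ univ ψ) {d y₁ z : ℝ} (hy₁ : ψ y₁ < d)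
    (hz : d ≤ ψ z) (hy₁z : y₁ < z) (hbetween : ∀ x ∈ Ioo y₁ z, ψ x < d) :
    IsLeast {x | d ≤ ψ x} z := by
  refine ⟨hz, fun x hx => le_of_not_gt fun hxz => ?_⟩
  rcases le_or_gt x y₁ with hxy | hxy
  · have := (hψ d).ordConnected.out ⟨mem_univ x, hx⟩ ⟨mem_univ z, hz⟩ ⟨hxy, hy₁z.le⟩
    exact hy₁.not_ge this.2
  · exact (hbetween x ⟨hxy, hxz⟩).not_ge hx

theorem isGreatest_superlevel (hψ : QuasiconcaveOn ℝ univ ψ) {d y₂ z : ℝ} (hy₂ : ψ y₂ < d)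
    (hz : d ≤ ψ z) (hzy₂ : z < y₂) (hbetween : ∀ x ∈ Ioo z y₂, ψ x < d) :
    IsGreatest {x | d ≤ ψ x} z := by
  refine ⟨hz, fun x hx => le_of_not_gt fun hzx => ?_⟩
  rcases le_or_gt y₂ x with hxy | hxy
  · have := (hψ d).ordConnected.out ⟨mem_univ z, hz⟩ ⟨mem_univ x, hx⟩ ⟨hzy₂.le, hxy⟩
    exact hy₂.not_ge this.2
  · exact (hbetween x ⟨hzx, hxy⟩).not_ge hx

theorem superlevel_bound_mem_Ioo (hψ : QuasiconcaveOn ℝ univ ψ) {y₁ y₂ g e d : ℝ}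
    (h12 : y₁ ≤ y₂) (haff : ∀ y ∈ Icc y₁ y₂, ψ y = g * y + e)
    (hd : d ∈ Ioo (min (ψ y₁) (ψ y₂)) (max (ψ y₁) (ψ y₂))) :
    sInf {x | d ≤ ψ x} ∈ Ioo y₁ y₂ ∨ sSup {x | d ≤ ψ x} ∈ Ioo y₁ y₂ := by
  have hψ₁ := haff y₁ ⟨le_rfl, h12⟩
  have hψ₂ := haff y₂ ⟨h12, le_rfl⟩
  -- `ψ` crosses the level `d` at the point `z` of `(y₁, y₂)` where `g z + e = d`
  rcases lt_or_ge (ψ y₁) (ψ y₂) with hlt | hge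
  · rw [min_eq_left hlt.le, max_eq_right hlt.le] at hd
    have hg : 0 < g := by nlinarith [hd.1, hd.2]
    obtain ⟨z, hz⟩ : ∃ z, g * z + e = d := ⟨(d - e) / g, by rw [mul_div_cancel₀ _ hg.ne']; ring⟩
    have hz₁ : y₁ < z := by nlinarith [hd.1]
    have hz₂ : z < y₂ := by nlinarith [hd.2]
    left
    rw [(isLeast_superlevel hψ hd.1 (by rw [haff z ⟨hz₁.le, hz₂.le⟩, hz]) hz₁
      fun x hx => by rw [haff x ⟨hx.1.le, hx.2.le.trans hz₂.le⟩]; nlinarith [hx.2]).csInf_eq]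
    exact ⟨hz₁, hz₂⟩
  · rw [min_eq_right hge, max_eq_left hge] at hd
    have hg : g < 0 := by nlinarith [hd.1, hd.2]
    obtain ⟨z, hz⟩ : ∃ z, g * z + e = d := ⟨(d - e) / g, by rw [mul_div_cancel₀ _ hg.ne]; ring⟩
    have hz₁ : y₁ < z := by nlinarith [hd.2]
    have hz₂ : z < y₂ := by nlinarith [hd.1]
    right
    rw [(isGreatest_superlevel hψ hd.1 (by rw [haff z ⟨hz₁.le, hz₂.le⟩, hz]) hz₂
      fun x hx => by rw [haff x ⟨hz₁.le.trans hx.1.le, hx.2.le⟩]; nlinarith [hx.1]).csSup_eq]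
    exact ⟨hz₁, hz₂⟩

theorem AffineOnGaps.comp {φ : ℝ → ℝ} {C D : Finset ℝ} (hφ : AffineOnGaps φ D)
    (hψ : AffineOnGaps ψ C) (hq : QuasiconcaveOn ℝ univ ψ) :
    ∃ E : Finset ℝ, E.card ≤ C.card + 2 * D.card ∧ AffineOnGaps (φ ∘ ψ) E := by
  -- `ψ` crosses a breakpoint `d` of `φ` only where it enters or leaves `{x | d ≤ ψ x}`
  -- (junk values of `sInf`, `sSup` merely add harmless breakpoints)
  set lo : ℝ → ℝ := fun d => sInf {x | d ≤ ψ x}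
  set hi : ℝ → ℝ := fun d => sSup {x | d ≤ ψ x}
  refine ⟨C ∪ D.image lo ∪ D.image hi, ?_, fun y₁ y₂ h12 havoid => ?_⟩
  · have h₁ := Finset.card_union_le (C ∪ D.image lo) (D.image hi)
    have h₂ := Finset.card_union_le C (D.image lo)
    have h₃ := Finset.card_image_le (s := D) (f := lo)
    have h₄ := Finset.card_image_le (s := D) (f := hi)
    omega
  obtain ⟨g, e, hge⟩ := hψ y₁ y₂ h12 fun c hc => havoid c (by simp [hc])
  obtain ⟨α, β, hαβ⟩ := hφ _ _ min_le_max fun d hd => by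
    by_contra! h
    rcases superlevel_bound_mem_Ioo hq h12 hge h with hmem | hmem
    · have := havoid (lo d) (Finset.mem_union_left _
        (Finset.mem_union_right _ (Finset.mem_image_of_mem lo hd)))
      exact this.elim hmem.1.not_ge hmem.2.not_ge
    · have := havoid (hi d) (Finset.mem_union_right _ (Finset.mem_image_of_mem hi hd))
      exact this.elim hmem.1.not_ge hmem.2.not_ge
  refine ⟨α * g, α * e + β, fun y hy => ?_⟩
  have hmem : ψ y ∈ uIcc (ψ y₁) (ψ y₂) := by
    rw [hge y hy, hge y₁ ⟨le_rfl, h12⟩, hge y₂ ⟨h12, le_rfl⟩, mem_uIcc]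
    rcases le_total 0 g with hg | hg
    · exact Or.inl ⟨by nlinarith [hy.1], by nlinarith [hy.2]⟩
    · exact Or.inr ⟨by nlinarith [hy.2], by nlinarith [hy.1]⟩
  rw [Function.comp_apply, hαβ _ hmem, hge y hy]
  ring

theorem AffineOnGaps.comp_of_quasiconvexOn {φ : ℝ → ℝ} {C D : Finset ℝ}
    (hφ : AffineOnGaps φ D) (hψ : AffineOnGaps ψ C) (hq : QuasiconvexOn ℝ univ ψ) :
    ∃ E : Finset ℝ, E.card ≤ C.card + 2 * D.card ∧ AffineOnGaps (φ ∘ ψ) E := by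
  obtain ⟨E, hE, hE'⟩ := hφ.comp_neg.comp hψ.neg (hq.antitone_comp fun _ _ h => neg_le_neg h)
  have hD : (D.image Neg.neg).card ≤ D.card := Finset.card_image_le
  refine ⟨E, by omega, ?_⟩
  simpa [Function.comp_def] using hE'

end Composition

theorem exists_affine_comp {f g : ℝ → ℝ} (hf : ∃ a b : ℝ, ∀ x, f x = a * x + b)
    (hg : ∃ a b : ℝ, ∀ x, g x = a * x + b) : ∃ a b : ℝ, ∀ x, (f ∘ g) x = a * x + b :=
  let ⟨a, b, hab⟩ := hf
  let ⟨c, d, hcd⟩ := hg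
  ⟨a * c, a * d + b, fun x => by rw [Function.comp_apply, hab, hcd]; ring⟩

theorem min_le_of_mem_Icc_of_affine {f : ℝ → ℝ} {a b l u y : ℝ} (hf : ∀ x, f x = a * x + b)
    (hy : y ∈ Icc l u) : min (f l) (f u) ≤ f y := by
  rw [hf, hf, hf]
  rcases le_total 0 a with ha | ha
  · exact (min_le_left _ _).trans (by nlinarith [hy.1])
  · exact (min_le_right _ _).trans (by nlinarith [hy.2])

theorem lowerEnv_comp_eq_min (F G H : Finset (ℝ → ℝ)) (hF : F.Nonempty) (hG : G.Nonempty)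
    (hH : H.Nonempty) (hFAff : ∀ f ∈ F, ∃ a b : ℝ, ∀ x : ℝ, f x = a * x + b)
    (hHmem : ∀ h : ℝ → ℝ, h ∈ H ↔ ∃ f ∈ F, ∃ g ∈ G, h = f ∘ g) (x : ℝ) :
    H.inf' hH (fun h => h x) = min (F.inf' hF fun f => f (G.inf' hG fun g => g x))
      (F.inf' hF fun f => f (G.sup' hG fun g => g x)) := by
  have hle : ∀ g ∈ G, H.inf' hH (fun h => h x) ≤ F.inf' hF fun f => f (g x) := fun g hg => by
    obtain ⟨f, hf, hfx⟩ := F.exists_mem_eq_inf' hF fun f => f (g x)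
    exact (H.inf'_le _ ((hHmem _).2 ⟨f, hf, g, hg, rfl⟩)).trans_eq hfx.symm
  obtain ⟨g₁, hg₁, h₁⟩ := G.exists_mem_eq_inf' hG fun g => g x
  obtain ⟨g₂, hg₂, h₂⟩ := G.exists_mem_eq_sup' hG fun g => g x
  refine le_antisymm (le_min (h₁ ▸ hle g₁ hg₁) (h₂ ▸ hle g₂ hg₂)) ?_
  -- an affine `f` is smallest at an end of the range `[G↓ x, G↑ x]` of the values `g x`
  obtain ⟨h, hh, hhx⟩ := H.exists_mem_eq_inf' hH fun h => h x
  obtain ⟨f, hf, g, hg, rfl⟩ := (hHmem h).1 hh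
  obtain ⟨a, b, hab⟩ := hFAff f hf
  rw [hhx, Function.comp_apply]
  exact (min_le_min (F.inf'_le _ hf) (F.inf'_le _ hf)).trans
    (min_le_of_mem_Icc_of_affine hab ⟨G.inf'_le _ hg, G.le_sup' (fun g => g x) hg⟩)

theorem slope_mem_union_of_infinite_min {A B : ℝ → ℝ} {SA SB : Finset ℝ}
    (hA : ∀ a b : ℝ, {y | A y = a * y + b}.Infinite → a ∈ SA)
    (hB : ∀ a b : ℝ, {y | B y = a * y + b}.Infinite → a ∈ SB) {a b : ℝ}
    (h : {y | min (A y) (B y) = a * y + b}.Infinite) : a ∈ SA ∪ SB := by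
  have hsub : {y | min (A y) (B y) = a * y + b} ⊆ {y | A y = a * y + b} ∪ {y | B y = a * y + b} :=
    fun y hy => by
      rcases min_choice (A y) (B y) with h' | h'
      · exact Or.inl (h'.symm.trans hy)
      · exact Or.inr (h'.symm.trans hy)
  rcases infinite_union.mp (h.mono hsub) with h' | h'
  exacts [Finset.mem_union_left _ (hA a b h'), Finset.mem_union_right _ (hB a b h')]

/-- if `F`, `G` are nonempty finite sets of affine functions and
`H = {f ∘ g | f ∈ F, g ∈ G}`, then the lower envelope `H_↓` is piecewise
linear with `p(H_↓) ≤ 4 p(F_↓) + 2 p(G_↓) + 2 p(G_↑)`. -/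
theorem nPieces_lower_envelope_comp (F G H : Finset (ℝ → ℝ))
    (hF : F.Nonempty) (hG : G.Nonempty) (hH : H.Nonempty)
    (hFAff : ∀ f ∈ F, ∃ a b : ℝ, ∀ x : ℝ, f x = a * x + b)
    (hGAff : ∀ g ∈ G, ∃ a b : ℝ, ∀ x : ℝ, g x = a * x + b)
    (hHmem : ∀ h : ℝ → ℝ, h ∈ H ↔ ∃ f ∈ F, ∃ g ∈ G, h = f ∘ g) :
    (∃ k : ℕ, PiecewiseAffineWith (fun x : ℝ => H.inf' hH (fun h => h x)) k) ∧
    nPieces (fun x : ℝ => H.inf' hH (fun h => h x)) ≤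
      4 * nPieces (fun x : ℝ => F.inf' hF (fun f => f x)) +
      2 * nPieces (fun x : ℝ => G.inf' hG (fun g => g x)) +
      2 * nPieces (fun x : ℝ => G.sup' hG (fun g => g x)) := by
  obtain ⟨CF, hCF, hF'⟩ :=
    exists_affineOnGaps_card_lt_nPieces (exists_affineOnGaps_lowerEnv_of_affine hF hFAff)
  obtain ⟨CGd, hCGd, hGd⟩ :=
    exists_affineOnGaps_card_lt_nPieces (exists_affineOnGaps_lowerEnv_of_affine hG hGAff)
  obtain ⟨CGu, hCGu, hGu⟩ :=
    exists_affineOnGaps_card_lt_nPieces (exists_affineOnGaps_upperEnv_of_affine hG hGAff)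
  obtain ⟨EA, hEA, hA⟩ := hF'.comp hGd (concaveOn_lowerEnv hG hGAff).quasiconcaveOn
  obtain ⟨EB, hEB, hB⟩ := hF'.comp_of_quasiconvexOn hGu (convexOn_upperEnv hG hGAff).quasiconvexOn
  obtain ⟨SA, hSA, hA'⟩ := hA.piecewiseAffineWith.exists_slopes
  obtain ⟨SB, hSB, hB'⟩ := hB.piecewiseAffineWith.exists_slopes
  have hHAff : ∀ h ∈ H, ∃ a b : ℝ, ∀ x, h x = a * x + b := fun h hh => by
    obtain ⟨f, hf, g, hg, rfl⟩ := (hHmem h).1 hh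
    exact exists_affine_comp (hFAff f hf) (hGAff g hg)
  obtain ⟨CH, hCH, hH'⟩ := exists_affineOnGaps_lowerEnv_of_contact hH (SA ∪ SB) hHAff
    fun h _ a b hab hinf => slope_mem_union_of_infinite_min hA' hB' <| hinf.mono fun y hy => by
      simp only [mem_ofPred_eq, Function.comp_apply] at hy ⊢
      rw [← lowerEnv_comp_eq_min F G H hF hG hH hFAff hHmem, ← hab, hy]
  have hunion := Finset.card_union_le SA SB
  refine ⟨⟨_, hH'.piecewiseAffineWith⟩, (Nat.sInf_le hH'.piecewiseAffineWith).trans ?_⟩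
  omega
end

section
/- Let f_0, f_1 : ℝ → ℝ be functions such that: the restriction of f_0 to [0, 1/3] is a bijection from [0, 1/3] onto [0, 1]; the restriction of f_1 to [2/3, 1] is a bijection from [2/3, 1] onto [0, 1]; |f_0(x)| ≥ 1 for every x ∈ (−∞, 0] ∪ [2/3, ∞); and |f_1(x)| ≥ 1 for every x ∈ (−∞, 1/3] ∪ [1, ∞). Then for every n ≥ 1 there exists a function α_n : {0,1}^n → (0, 1) such that: (i) α_n(σ) ∈ [0, 1/3] whenever σ_1 = 0; (ii) α_n(σ) ∈ [2/3, 1] whenever σ_1 = 1; (iii) for all σ, τ ∈ {0,1}^n, α_n(σ) = α_n(τ) if and only if σ = τ (α_n is injective); and (iv) for all σ, τ ∈ {0,1}^n, f_σ(α_n(τ)) = 0 if and only if σ = τ. -/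
/-- For a bit string `σ = σ₁ ⋯ σₙ` (as a list of booleans, `false ↦ f₀`,
`true ↦ f₁`), the composition `f_σ = f_{σₙ} ∘ ⋯ ∘ f_{σ₁}`: the innermost
function corresponds to the first bit. -/
def bitComp (f0 f1 : ℝ → ℝ) (l : List Bool) : ℝ → ℝ :=
  fun x => l.foldl (fun y b => (if b then f1 else f0) y) x

/-- if `f₀` restricted to `[0, 1/3]` is a bijection onto `[0,1]`,
`f₁` restricted to `[2/3, 1]` is a bijection onto `[0,1]`, `|f₀ x| ≥ 1` on
`(-∞, 0] ∪ [2/3, ∞)` and `|f₁ x| ≥ 1` on `(-∞, 1/3] ∪ [1, ∞)`, then for every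
`n ≥ 1` there is `α : {0,1}ⁿ → (0,1)` such that (i) `α σ ∈ [0, 1/3]` when
`σ₁ = 0`; (ii) `α σ ∈ [2/3, 1]` when `σ₁ = 1`; (iii) `α` is injective
(`α σ = α τ ↔ σ = τ`); (iv) `f_σ (α τ) = 0 ↔ σ = τ`. -/
theorem exists_alpha (f0 f1 : ℝ → ℝ)
    (h0 : Set.BijOn f0 (Set.Icc (0 : ℝ) (1/3)) (Set.Icc (0 : ℝ) 1))
    (h1 : Set.BijOn f1 (Set.Icc (2/3 : ℝ) 1) (Set.Icc (0 : ℝ) 1))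
    (hb0 : ∀ x : ℝ, x ∈ Set.Iic (0 : ℝ) ∪ Set.Ici (2/3 : ℝ) → 1 ≤ |f0 x|)
    (hb1 : ∀ x : ℝ, x ∈ Set.Iic (1/3 : ℝ) ∪ Set.Ici (1 : ℝ) → 1 ≤ |f1 x|)
    (n : ℕ) (hn : 1 ≤ n) :
    ∃ α : (Fin n → Bool) → ℝ,
      (∀ σ : Fin n → Bool, α σ ∈ Set.Ioo (0 : ℝ) 1) ∧
      (∀ σ : Fin n → Bool, σ ⟨0, hn⟩ = false → α σ ∈ Set.Icc (0 : ℝ) (1/3)) ∧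
      (∀ σ : Fin n → Bool, σ ⟨0, hn⟩ = true → α σ ∈ Set.Icc (2/3 : ℝ) 1) ∧
      (∀ σ τ : Fin n → Bool, α σ = α τ ↔ σ = τ) ∧
      (∀ σ τ : Fin n → Bool,
        bitComp f0 f1 (List.ofFn σ) (α τ) = 0 ↔ σ = τ) := by
  -- escape lemma: once the value has absolute value ≥ 1, it stays ≥ 1
  have escape : ∀ l : List Bool, ∀ y : ℝ, 1 ≤ |y| → 1 ≤ |bitComp f0 f1 l y| := by
    intro l
    induction l with
    | nil => intro y hy; exact hy
    | cons b l ih =>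
      intro y hy
      have hy' : y ≤ -1 ∨ 1 ≤ y := by
        rcases le_abs.mp hy with h | h
        · exact Or.inr h
        · exact Or.inl (by linarith)
      have hr : bitComp f0 f1 (b :: l) y = bitComp f0 f1 l ((if b then f1 else f0) y) := rfl
      rw [hr]
      apply ih
      cases b with
      | false =>
        simp only [Bool.false_eq_true, if_false]
        apply hb0
        rcases hy' with h | h
        · exact Or.inl (Set.mem_Iic.mpr (by linarith))
        · exact Or.inr (Set.mem_Ici.mpr (by linarith))
      | true =>
        simp only [if_true]
        apply hb1
        rcases hy' with h | h
        · exact Or.inl (Set.mem_Iic.mpr (by linarith))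
        · exact Or.inr (Set.mem_Ici.mpr (by linarith))
  have main : ∀ m : ℕ, ∀ hm : 1 ≤ m, ∃ α : (Fin m → Bool) → ℝ,
      (∀ σ : Fin m → Bool, α σ ∈ Set.Ioo (0 : ℝ) 1) ∧
      (∀ σ : Fin m → Bool, σ ⟨0, hm⟩ = false → α σ ∈ Set.Icc (0 : ℝ) (1/3)) ∧
      (∀ σ : Fin m → Bool, σ ⟨0, hm⟩ = true → α σ ∈ Set.Icc (2/3 : ℝ) 1) ∧
      (∀ σ τ : Fin m → Bool,
        bitComp f0 f1 (List.ofFn σ) (α τ) = 0 ↔ σ = τ) := by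
    intro m hm
    induction m, hm using Nat.le_induction with
    | base =>
      obtain ⟨x0, hx0mem, hx0⟩ : ∃ x ∈ Set.Icc (0:ℝ) (1/3), f0 x = 0 :=
        h0.surjOn ⟨le_rfl, zero_le_one⟩
      obtain ⟨x1, hx1mem, hx1⟩ : ∃ x ∈ Set.Icc (2/3:ℝ) 1, f1 x = 0 :=
        h1.surjOn ⟨le_rfl, zero_le_one⟩
      have hx0ne : x0 ≠ 0 := by
        intro h
        have := hb0 x0 (Or.inl (Set.mem_Iic.mpr (le_of_eq h)))
        rw [hx0] at this; simp at this; linarith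
      have hx1ne : x1 ≠ 1 := by
        intro h
        have := hb1 x1 (Or.inr (Set.mem_Ici.mpr (ge_of_eq h)))
        rw [hx1] at this; simp at this; linarith
      have hx0pos : 0 < x0 := lt_of_le_of_ne hx0mem.1 (Ne.symm hx0ne)
      have hx1lt : x1 < 1 := lt_of_le_of_ne hx1mem.2 hx1ne
      refine ⟨fun σ => if σ ⟨0, Nat.one_pos⟩ = true then x1 else x0, ?_, ?_, ?_, ?_⟩
      · intro σ
        by_cases h : σ ⟨0, Nat.one_pos⟩ = true
        · simp only [h, if_true]
          exact ⟨by linarith [hx1mem.1], hx1lt⟩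
        · simp only [if_neg h]
          exact ⟨hx0pos, by linarith [hx0mem.2]⟩
      · intro σ h
        simp only [h, Bool.false_eq_true, if_false]
        exact hx0mem
      · intro σ h
        simp only [h, if_true]
        exact hx1mem
      · intro σ τ
        have hfun : ∀ (a b : Fin 1 → Bool), a ⟨0, Nat.one_pos⟩ = b ⟨0, Nat.one_pos⟩ → a = b := by
          intro a b h
          funext i
          rw [Subsingleton.elim i (⟨0, Nat.one_pos⟩ : Fin 1)]
          exact h
        have hofn : List.ofFn σ = [σ ⟨0, Nat.one_pos⟩] := by
          simp [List.ofFn_succ]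
        rw [hofn]
        have hbc : ∀ (b : Bool) (x : ℝ), bitComp f0 f1 [b] x = (if b then f1 else f0) x := by
          intro b x; rfl
        rw [hbc]
        rcases Bool.eq_false_or_eq_true (σ ⟨0, Nat.one_pos⟩) with hσ | hσ <;>
          rcases Bool.eq_false_or_eq_true (τ ⟨0, Nat.one_pos⟩) with hτ | hτ <;>
          simp only [hσ, hτ, if_true, Bool.false_eq_true, if_false]
        · rw [hx1]
          exact ⟨fun _ => hfun σ τ (by rw [hσ, hτ]), fun _ => rfl⟩
        · constructor
          · intro h
            have hcon := hb1 x0 (Or.inl (Set.mem_Iic.mpr hx0mem.2))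
            rw [h] at hcon; norm_num at hcon
          · intro h
            rw [h, hτ] at hσ
            exact absurd hσ (by simp)
        · constructor
          · intro h
            have hcon := hb0 x1 (Or.inr (Set.mem_Ici.mpr hx1mem.1))
            rw [h] at hcon; norm_num at hcon
          · intro h
            rw [h, hτ] at hσ
            exact absurd hσ (by simp)
        · rw [hx0]
          exact ⟨fun _ => hfun σ τ (by rw [hσ, hτ]), fun _ => rfl⟩
    | succ k hk ih =>
      obtain ⟨α, hIoo, hF, hT, hIff⟩ := ih
      have key : ∀ σ : Fin (k+1) → Bool, ∃ x : ℝ,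
          x ∈ (if σ ⟨0, Nat.succ_pos k⟩ = true then Set.Icc (2/3:ℝ) 1
               else Set.Icc (0:ℝ) (1/3)) ∧
          (if σ ⟨0, Nat.succ_pos k⟩ = true then f1 else f0) x = α (σ ∘ Fin.succ) := by
        intro σ
        have hy : α (σ ∘ Fin.succ) ∈ Set.Icc (0:ℝ) 1 :=
          ⟨(hIoo _).1.le, (hIoo _).2.le⟩
        by_cases h : σ ⟨0, Nat.succ_pos k⟩ = true
        · simp only [h, if_true]
          obtain ⟨x, hx, hfx⟩ := h1.surjOn hy
          exact ⟨x, hx, hfx⟩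
        · simp only [if_neg h]
          obtain ⟨x, hx, hfx⟩ := h0.surjOn hy
          exact ⟨x, hx, hfx⟩
      choose β hβmem hβval using key
      have hmemF : ∀ σ : Fin (k+1) → Bool, σ ⟨0, Nat.succ_pos k⟩ = false →
          β σ ∈ Set.Icc (0:ℝ) (1/3) := by
        intro σ h
        have := hβmem σ
        rw [h] at this
        simpa using this
      have hmemT : ∀ σ : Fin (k+1) → Bool, σ ⟨0, Nat.succ_pos k⟩ = true →
          β σ ∈ Set.Icc (2/3:ℝ) 1 := by
        intro σ h
        have := hβmem σ
        rw [h] at this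
        simpa using this
      have hvalF : ∀ σ : Fin (k+1) → Bool, σ ⟨0, Nat.succ_pos k⟩ = false →
          f0 (β σ) = α (σ ∘ Fin.succ) := by
        intro σ h
        have := hβval σ
        rw [h] at this
        simpa using this
      have hvalT : ∀ σ : Fin (k+1) → Bool, σ ⟨0, Nat.succ_pos k⟩ = true →
          f1 (β σ) = α (σ ∘ Fin.succ) := by
        intro σ h
        have := hβval σ
        rw [h] at this
        simpa using this
      have hIoo' : ∀ σ : Fin (k+1) → Bool, β σ ∈ Set.Ioo (0:ℝ) 1 := by
        intro σ
        rcases Bool.eq_false_or_eq_true (σ ⟨0, Nat.succ_pos k⟩) with h | h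
        swap
        · have hmem := hmemF σ h
          have hval := hvalF σ h
          have hne : β σ ≠ 0 := by
            intro h0'
            have hcon := hb0 (β σ) (Or.inl (Set.mem_Iic.mpr (le_of_eq h0')))
            rw [hval] at hcon
            have h1' := hIoo (σ ∘ Fin.succ)
            rw [abs_of_pos h1'.1] at hcon
            linarith [h1'.2]
          exact ⟨lt_of_le_of_ne hmem.1 (Ne.symm hne), by linarith [hmem.2]⟩
        · have hmem := hmemT σ h
          have hval := hvalT σ h
          have hne : β σ ≠ 1 := by
            intro h1''
            have hcon := hb1 (β σ) (Or.inr (Set.mem_Ici.mpr (ge_of_eq h1'')))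
            rw [hval] at hcon
            have h1' := hIoo (σ ∘ Fin.succ)
            rw [abs_of_pos h1'.1] at hcon
            linarith [h1'.2]
          exact ⟨by linarith [hmem.1], lt_of_le_of_ne hmem.2 hne⟩
      have heq : ∀ σ τ : Fin (k+1) → Bool,
          σ = τ ↔ (σ ⟨0, Nat.succ_pos k⟩ = τ ⟨0, Nat.succ_pos k⟩ ∧
            σ ∘ Fin.succ = τ ∘ Fin.succ) := by
        intro σ τ
        constructor
        · intro h; rw [h]; exact ⟨rfl, rfl⟩
        · rintro ⟨h1', h2'⟩
          funext i
          rcases Fin.eq_zero_or_eq_succ i with hi | ⟨j, hj⟩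
          · rw [hi]
            exact h1'
          · rw [hj]
            exact congrFun h2' j
      refine ⟨β, hIoo', hmemF, hmemT, ?_⟩
      intro σ τ
      have hz : (0 : Fin (k+1)) = ⟨0, Nat.succ_pos k⟩ := rfl
      have hofn : List.ofFn σ = σ ⟨0, Nat.succ_pos k⟩ :: List.ofFn (σ ∘ Fin.succ) := by
        rw [List.ofFn_succ]
        rfl
      rw [hofn]
      have hstep : ∀ (b : Bool) (l : List Bool) (x : ℝ),
          bitComp f0 f1 (b :: l) x = bitComp f0 f1 l ((if b then f1 else f0) x) := by
        intro b l x; rfl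
      rw [hstep]
      by_cases hbb : σ ⟨0, Nat.succ_pos k⟩ = τ ⟨0, Nat.succ_pos k⟩
      · rw [hbb, hβval τ, hIff, heq σ τ]
        constructor
        · intro h; exact ⟨hbb, h⟩
        · intro h; exact h.2
      · have hne : σ ≠ τ := fun h => hbb (by rw [h])
        simp only [hne, iff_false]
        intro hzero
        have habs : 1 ≤ |(if σ ⟨0, Nat.succ_pos k⟩ = true then f1 else f0) (β τ)| := by
          rcases Bool.eq_false_or_eq_true (τ ⟨0, Nat.succ_pos k⟩) with hτ | hτ
          swap
          · have hσ : σ ⟨0, Nat.succ_pos k⟩ = true := by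
              rcases Bool.eq_false_or_eq_true (σ ⟨0, Nat.succ_pos k⟩) with h' | h'
              · exact h'
              · exact absurd (h'.trans hτ.symm) hbb
            simp only [hσ, if_true]
            have hmem := hmemF τ hτ
            exact hb1 (β τ) (Or.inl (Set.mem_Iic.mpr hmem.2))
          · have hσ : σ ⟨0, Nat.succ_pos k⟩ = false := by
              rcases Bool.eq_false_or_eq_true (σ ⟨0, Nat.succ_pos k⟩) with h' | h'
              · exact absurd (h'.trans hτ.symm) hbb
              · exact h'
            simp only [hσ, Bool.false_eq_true, if_false]
            have hmem := hmemT τ hτ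
            exact hb0 (β τ) (Or.inr (Set.mem_Ici.mpr hmem.1))
        have hesc := escape (List.ofFn (σ ∘ Fin.succ)) _ habs
        rw [hzero] at hesc
        norm_num at hesc
  obtain ⟨α, hIoo, hF, hT, hIff⟩ := main n hn
  refine ⟨α, hIoo, hF, hT, ?_, hIff⟩
  intro σ τ
  constructor
  · intro h
    have h2 := (hIff σ σ).mpr rfl
    rw [h] at h2
    exact (hIff σ τ).mp h2
  · intro h; rw [h]
end
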